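/- The Baxter equivalence relation is compatible with restriction to alphabet intervals: for any interval I of the ordered alphabet A and any words u, v in A*, if u is Baxter-equivalent to v, then the restrictions u|_I and v|_I are Baxter-equivalent. -/

import Mathlib

open scoped Classical

/-- Baxter adjacency relations on words over the alphabet of natural numbers. -/
def BaxterAdj (w w' : List ℕ) : Prop :=
  (∃ (a b c d : ℕ) (u v : List ℕ), a ≤ b ∧ b < c ∧ c ≤ d ∧
      w = c :: (u ++ a :: d :: (v ++ [b])) ∧ w' = c :: (u ++ d :: a :: (v ++ [b]))) ∨
  (∃ (a b c d : ℕ) (u v : List ℕ), a < b ∧ b ≤ c ∧ c < d ∧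
      w = b :: (u ++ d :: a :: (v ++ [c])) ∧ w' = b :: (u ++ a :: d :: (v ++ [c])))

/-- One rewriting step: an adjacency applied inside a word (congruence context). -/
def BaxterStep (w w' : List ℕ) : Prop :=
  ∃ (p s u v : List ℕ), BaxterAdj u v ∧ w = p ++ u ++ s ∧ w' = p ++ v ++ s

/-- The Baxter congruence: the equivalence generated by the Baxter steps. -/
def BaxterEquiv : List ℕ → List ℕ → Prop := Relation.EqvGen BaxterStep

/-- Sylvester adjacency: a c u b ≡ c a u b when a ≤ b < c. -/
def SylvAdj (w w' : List ℕ) : Prop :=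
  ∃ (a b c : ℕ) (u : List ℕ), a ≤ b ∧ b < c ∧
    w = a :: c :: (u ++ [b]) ∧ w' = c :: a :: (u ++ [b])

def SylvStep (w w' : List ℕ) : Prop :=
  ∃ (p s u v : List ℕ), SylvAdj u v ∧ w = p ++ u ++ s ∧ w' = p ++ v ++ s

def SylvEquiv : List ℕ → List ℕ → Prop := Relation.EqvGen SylvStep

/-- #-sylvester adjacency: b u a c ≡ b u c a when a < b ≤ c. -/
def SylvHAdj (w w' : List ℕ) : Prop :=
  ∃ (a b c : ℕ) (u : List ℕ), a < b ∧ b ≤ c ∧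
    w = b :: (u ++ [a, c]) ∧ w' = b :: (u ++ [c, a])

def SylvHStep (w w' : List ℕ) : Prop :=
  ∃ (p s u v : List ℕ), SylvHAdj u v ∧ w = p ++ u ++ s ∧ w' = p ++ v ++ s

def SylvHEquiv : List ℕ → List ℕ → Prop := Relation.EqvGen SylvHStep

/-- The standardized word of `u`: position `i` receives the rank of the letter `u i`
(ties broken from left to right), ranks starting at `1`. -/
def std (u : List ℕ) : List ℕ :=
  (List.range u.length).map fun i =>
    ((List.range u.length).filter fun j =>
      decide (u.getD j 0 < u.getD i 0 ∨ (u.getD j 0 = u.getD i 0 ∧ j < i))).length + 1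

/-- The maximal letter of a word. -/
def wordMax (u : List ℕ) : ℕ := u.foldr max 0

/-- The Schützenberger transformation: reverse and complement each letter w.r.t. max + 1. -/
def schutz (u : List ℕ) : List ℕ := u.reverse.map fun x => wordMax u + 1 - x

/-- Labeled binary trees. -/
inductive BT where
  | leaf : BT
  | node : BT → ℕ → BT → BT
deriving DecidableEq

/-- Leaf insertion into a left binary search tree. -/
def leafInsL : BT → ℕ → BT
  | .leaf, a => .node .leaf a .leaf
  | .node l b r, a => if a < b then .node (leafInsL l a) b r else .node l b (leafInsL r a)

/-- Leaf insertion into a right binary search tree. -/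
def leafInsR : BT → ℕ → BT
  | .leaf, a => .node .leaf a .leaf
  | .node l b r, a => if a ≤ b then .node (leafInsR l a) b r else .node l b (leafInsR r a)

/-- The lower restricted tree `T_{≤ a}` of a right binary search tree. -/
def splitLE : BT → ℕ → BT
  | .leaf, _ => .leaf
  | .node l b r, a => if b ≤ a then .node l b (splitLE r a) else splitLE l a

/-- The higher restricted tree `T_{> a}` of a right binary search tree. -/
def splitGT : BT → ℕ → BT
  | .leaf, _ => .leaf
  | .node l b r, a => if b ≤ a then splitGT r a else .node (splitGT l a) b r

/-- Root insertion into a right binary search tree. -/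
def rootIns (t : BT) (a : ℕ) : BT := .node (splitLE t a) a (splitGT t a)

/-- The left tree of the P-symbol: leaf insertions from left to right. -/
def insL (u : List ℕ) : BT := u.foldl leafInsL .leaf

/-- The right tree of the P-symbol: root insertions from left to right. -/
def insR (u : List ℕ) : BT := u.foldl rootIns .leaf

/-- The P-symbol of a word. -/
def Psymb (u : List ℕ) : BT × BT := (insL u, insR u)

/-- Unlabeled binary trees. -/
inductive UBT where
  | leaf : UBT
  | node : UBT → UBT → UBT
deriving DecidableEq

/-- The shape of a labeled binary tree. -/
def shape : BT → UBT
  | .leaf => .leaf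
  | .node l _ r => .node (shape l) (shape r)

/-- The shape of the P-symbol of a word. -/
def Pshape (u : List ℕ) : UBT × UBT := (shape (insL u), shape (insR u))

/-- Number of internal nodes. -/
def sizeU : UBT → ℕ
  | .leaf => 0
  | .node l r => sizeU l + sizeU r + 1

/-- Orientations of the leaves, from left to right: `true` means right-oriented
(the leaf is the right child of its parent); the parameter is the orientation
assigned if the tree is reduced to a leaf. -/
def loU : UBT → Bool → List Bool
  | .leaf, b => [b]
  | .node l r, _ => loU l false ++ loU r true

/-- Leaf orientations of a labeled binary tree. -/
def loB : BT → Bool → List Bool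
  | .leaf, b => [b]
  | .node l _ r, _ => loB l false ++ loB r true

/-- The canopy: orientations of the leaves except the first and the last one. -/
def canU (t : UBT) : List Bool := ((loU t false).drop 1).dropLast

/-- A pair of twin binary trees: same number of nodes and complementary canopies. -/
def IsTwin (J : UBT × UBT) : Prop :=
  sizeU J.1 = sizeU J.2 ∧ (canU J.1).length = (canU J.2).length ∧
    ∀ i < (canU J.1).length, (canU J.1).getD i false ≠ (canU J.2).getD i false

/-- `σ` is (the word of) a permutation of `{1, …, n}`. -/
def IsPerm (n : ℕ) (σ : List ℕ) : Prop := σ.Perm (List.range' 1 n)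

/-- Covering-type step of the right permutohedron (weak) order: exchange of two
adjacent letters `a < b`. -/
def PermutoStep (σ ν : List ℕ) : Prop :=
  ∃ (p s : List ℕ) (a b : ℕ), a < b ∧ σ = p ++ a :: b :: s ∧ ν = p ++ b :: a :: s

/-- The right permutohedron (weak) order. -/
def PermutoLe : List ℕ → List ℕ → Prop := Relation.ReflTransGen PermutoStep

/-- Baxter permutations: avoiding the generalized patterns 2-41-3 and 3-14-2. -/
def IsBaxterPerm (σ : List ℕ) : Prop :=
  ∀ i j k, i < j → j + 1 < k → k < σ.length →
    ¬(σ.getD (j+1) 0 < σ.getD i 0 ∧ σ.getD i 0 < σ.getD k 0 ∧ σ.getD k 0 < σ.getD j 0) ∧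
    ¬(σ.getD j 0 < σ.getD k 0 ∧ σ.getD k 0 < σ.getD i 0 ∧ σ.getD i 0 < σ.getD (j+1) 0)

/-! An exchange of two adjacent letters `a`, `d` becomes invisible once one of them is deleted.
If both survive restriction to an interval, then so do the letters `b`, `c` witnessing the
Baxter exchange, since they lie between `a` and `d`; hence every Baxter step restricts to a
Baxter step or to an equality. -/

open Relation

theorem Relation.EqvGen.map {α β : Type*} {r : α → α → Prop} {s : β → β → Prop}
    (f : α → β) (hf : ∀ x y, r x y → EqvGen s (f x) (f y)) {x y : α} (h : EqvGen r x y) :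
    EqvGen s (f x) (f y) := by
  induction h with
  | rel x y hxy => exact hf x y hxy
  | refl => exact .refl _
  | symm _ _ _ ih => exact ih.symm
  | trans _ _ _ _ _ ih₁ ih₂ => exact ih₁.trans _ _ _ ih₂

theorem List.filter_cons_cons_comm {α : Type*} {p : α → Bool} {a d : α} (t : List α)
    (h : ¬(p a ∧ p d)) : (a :: d :: t).filter p = (d :: a :: t).filter p := by
  cases ha : p a <;> cases hd : p d <;> simp_all

section Restriction

variable {I : Set ℕ} {u v : List ℕ}

theorem BaxterAdj.filter_of_ordConnected (hI : I.OrdConnected) (h : BaxterAdj u v) :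
    ReflGen BaxterAdj (u.filter fun x => decide (x ∈ I))
      (v.filter fun x => decide (x ∈ I)) := by
  rcases h with ⟨a, b, c, d, u, v, hab, hbc, hcd, rfl, rfl⟩ |
    ⟨a, b, c, d, u, v, hab, hbc, hcd, rfl, rfl⟩
  · by_cases had : a ∈ I ∧ d ∈ I
    · obtain ⟨ha, hd⟩ := had
      have hb : b ∈ I := hI.out ha hd ⟨hab, (hbc.trans_le hcd).le⟩
      have hc : c ∈ I := hI.out ha hd ⟨hab.trans hbc.le, hcd⟩
      simp only [List.filter_cons, List.filter_append, ha, hb, hc, hd, decide_true, if_true]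
      exact .single (.inl ⟨a, b, c, d, _, _, hab, hbc, hcd, rfl, rfl⟩)
    · have hswap := List.filter_cons_cons_comm (p := fun x => decide (x ∈ I)) (v ++ [b])
        (by simpa using had)
      simp only [List.filter_cons, List.filter_append, hswap]
      exact .refl
  · by_cases had : a ∈ I ∧ d ∈ I
    · obtain ⟨ha, hd⟩ := had
      have hb : b ∈ I := hI.out ha hd ⟨hab.le, hbc.trans hcd.le⟩
      have hc : c ∈ I := hI.out ha hd ⟨hab.le.trans hbc, hcd.le⟩
      simp only [List.filter_cons, List.filter_append, ha, hb, hc, hd, decide_true, if_true]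
      exact .single (.inr ⟨a, b, c, d, _, _, hab, hbc, hcd, rfl, rfl⟩)
    · have hswap := List.filter_cons_cons_comm (p := fun x => decide (x ∈ I)) (v ++ [c])
        (by simpa [and_comm] using had)
      simp only [List.filter_cons, List.filter_append, hswap]
      exact .refl

theorem BaxterStep.filter_of_ordConnected (hI : I.OrdConnected) (h : BaxterStep u v) :
    ReflGen BaxterStep (u.filter fun x => decide (x ∈ I))
      (v.filter fun x => decide (x ∈ I)) := by
  obtain ⟨p, s, u, v, hadj, rfl, rfl⟩ := h
  have hadj' := hadj.filter_of_ordConnected hI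
  simp only [List.filter_append]
  generalize u.filter _ = u', v.filter _ = v' at hadj' ⊢
  rcases hadj' with _ | hadj'
  · exact .refl
  · exact .single ⟨_, _, _, _, hadj', rfl, rfl⟩

end Restriction

/-- the Baxter equivalence is compatible with restriction to
alphabet intervals. -/
theorem baxter_compatible_with_interval_restriction (I : Set ℕ)
    (hI : ∀ a b c : ℕ, a ∈ I → c ∈ I → a ≤ b → b ≤ c → b ∈ I) :
    ∀ u v : List ℕ, BaxterEquiv u v →
      BaxterEquiv (u.filter fun x => decide (x ∈ I)) (v.filter fun x => decide (x ∈ I)) := by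
  have hI' : I.OrdConnected := ⟨fun a ha c hc b hb => hI a b c ha hc hb.1 hb.2⟩
  intro u v h
  exact h.map _ fun x y hxy =>
    EqvGen.reflGen_le_eqvGen _ _ _ (hxy.filter_of_ordConnected hI')
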